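/- arXiv:2312.14596 — 3 statements merged into one kernel-verified Lean document; each statement's English description precedes it below -/
import Mathlib

section
/- For all cumulative distribution functions F and G on the real line, every δ ≥ 0 and every α ∈ ℝ, the quantiles satisfy Q_{α − L_δ(F,G)}(F) − δ ≤ Q_α(G) ≤ Q_{α + L_δ(F,G)}(F) + δ (inequalities in the extended reals, with the conventions ±∞ ± δ = ±∞). -/
open Filter MeasureTheory Set

/-- A cumulative distribution function on ℝ: nondecreasing, right-continuous,
with limit 0 at -∞ and 1 at +∞. -/
def IsCDF (F : ℝ → ℝ) : Prop :=
  Monotone F ∧ (∀ t : ℝ, ContinuousWithinAt F (Set.Ici t) t) ∧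
    Tendsto F atBot (nhds 0) ∧ Tendsto F atTop (nhds 1)

/-- The Lévy gauge with tolerance `δ` between two cdfs. -/
noncomputable def levyGauge (δ : ℝ) (F G : ℝ → ℝ) : ℝ :=
  sInf {ε : ℝ | 0 ≤ ε ∧ ∀ t : ℝ, F (t - δ) - ε ≤ G t ∧ G t ≤ F (t + δ) + ε}

/-- The `α`-quantile `Q_α(F) := inf {x : ℝ | F x ≥ α}` as an extended real,
with `inf ∅ = +∞` (so `Q_α(F) = -∞` for `α ≤ 0` and `Q_α(F) = +∞` for `α > 1`). -/
noncomputable def cdfQuantile (F : ℝ → ℝ) (α : ℝ) : EReal :=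
  sInf ((fun x : ℝ => (x : EReal)) '' {x : ℝ | α ≤ F x})

lemma cdf_nonneg {F : ℝ → ℝ} (hF : IsCDF F) (x : ℝ) : 0 ≤ F x :=
  hF.1.le_of_tendsto hF.2.2.1 x

lemma cdf_le_one {F : ℝ → ℝ} (hF : IsCDF F) (x : ℝ) : F x ≤ 1 :=
  hF.1.ge_of_tendsto hF.2.2.2 x

/-- The defining inequalities hold at the Lévy gauge itself. -/
lemma levyGauge_spec {F G : ℝ → ℝ} (hF : IsCDF F) (hG : IsCDF G) (δ : ℝ) (t : ℝ) :
    F (t - δ) - levyGauge δ F G ≤ G t ∧ G t ≤ F (t + δ) + levyGauge δ F G := by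
  set S : Set ℝ := {ε : ℝ | 0 ≤ ε ∧ ∀ t : ℝ, F (t - δ) - ε ≤ G t ∧ G t ≤ F (t + δ) + ε}
  have hne : S.Nonempty := by
    refine ⟨1, le_refl 1 |>.trans_eq rfl |> fun _ => zero_le_one, fun s => ?_⟩
    constructor
    · linarith [cdf_le_one hF (s - δ), cdf_nonneg hG s]
    · linarith [cdf_nonneg hF (s + δ), cdf_le_one hG s]
  have hbdd : BddBelow S := ⟨0, fun ε hε => hε.1⟩
  constructor
  · refine le_of_forall_pos_le_add fun η hη => ?_
    obtain ⟨ε, hεS, hεlt⟩ := Real.lt_sInf_add_pos hne hη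
    have := (hεS.2 t).1
    simp only [levyGauge]
    linarith
  · refine le_of_forall_pos_le_add fun η hη => ?_
    obtain ⟨ε, hεS, hεlt⟩ := Real.lt_sInf_add_pos hne hη
    have := (hεS.2 t).2
    simp only [levyGauge]
    linarith

/-- Quantile inequalities from the Lévy gauge:
`Q_{α - L_δ(F,G)}(F) - δ ≤ Q_α(G) ≤ Q_{α + L_δ(F,G)}(F) + δ` in the extended reals. -/
theorem cdfQuantile_levyGauge_ineq (F G : ℝ → ℝ) (hF : IsCDF F) (hG : IsCDF G)
    (δ : ℝ) (hδ : 0 ≤ δ) (α : ℝ) :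
    cdfQuantile F (α - levyGauge δ F G) - (δ : EReal) ≤ cdfQuantile G α ∧
      cdfQuantile G α ≤ cdfQuantile F (α + levyGauge δ F G) + (δ : EReal) := by
  set L := levyGauge δ F G with hL
  have hδne : (δ : EReal) ≠ ⊥ ∨ True := Or.inl (EReal.coe_ne_bot δ)
  constructor
  · -- Q_{α-L}(F) - δ ≤ Q_α(G)
    refine le_sInf ?_
    rintro _ ⟨x, hx, rfl⟩
    -- α ≤ G x, so α - L ≤ F (x + δ), so Q_{α-L}(F) ≤ x + δ
    have h1 : α - L ≤ F (x + δ) := by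
      have h := (levyGauge_spec hF hG δ x).2
      rw [← hL] at h
      have hx' : α ≤ G x := hx
      linarith
    have h2 : cdfQuantile F (α - L) ≤ ((x + δ : ℝ) : EReal) :=
      sInf_le ⟨x + δ, h1, rfl⟩
    rw [EReal.sub_le_iff_le_add (Or.inl (EReal.coe_ne_bot δ))
      (Or.inl (EReal.coe_ne_top δ))]
    calc cdfQuantile F (α - L) ≤ ((x + δ : ℝ) : EReal) := h2
      _ = (x : EReal) + (δ : EReal) := by rw [EReal.coe_add]
  · -- Q_α(G) ≤ Q_{α+L}(F) + δ
    rw [← EReal.sub_le_iff_le_add (Or.inl (EReal.coe_ne_bot δ))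
      (Or.inl (EReal.coe_ne_top δ))]
    refine le_sInf ?_
    rintro _ ⟨x, hx, rfl⟩
    -- α + L ≤ F x, so α ≤ G (x + δ), so Q_α(G) ≤ x + δ
    have h1 : α ≤ G (x + δ) := by
      have := (levyGauge_spec hF hG δ (x + δ)).1
      have hxd : x + δ - δ = x := by ring
      rw [hxd, ← hL] at this
      have hx' : α + L ≤ F x := hx
      linarith
    have h2 : cdfQuantile G α ≤ ((x + δ : ℝ) : EReal) :=
      sInf_le ⟨x + δ, h1, rfl⟩
    rw [EReal.sub_le_iff_le_add (Or.inl (EReal.coe_ne_bot δ))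
      (Or.inl (EReal.coe_ne_top δ))]
    calc cdfQuantile G α ≤ ((x + δ : ℝ) : EReal) := h2
      _ = (x : EReal) + (δ : EReal) := by rw [EReal.coe_add]
end

section
/- Let g : ℝ → ℝ have finite total variation V_{−K}^{K}(g) on every interval [−K, K] with K > 0, and suppose V := sup_{K>0} V_{−K}^{K}(g) is finite. Then for all real-valued random variables X and Y with cumulative distribution functions F_X and F_Y, |E[g(X)] − E[g(Y)]| ≤ V · sup_{t ∈ ℝ} |F_X(t) − F_Y(t)|. -/
open Filter MeasureTheory Set

/-- The cumulative distribution function of a real random variable `X` under `P`. -/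
noncomputable def rvCdf {Ω : Type*} [MeasurableSpace Ω] (P : MeasureTheory.Measure Ω)
    (X : Ω → ℝ) (t : ℝ) : ℝ :=
  (P {ω | X ω ≤ t}).toReal

/-!
Pass to the laws `μ, ν` of `X, Y`, and let `D` bound `|μ(-∞, t] - ν(-∞, t]|`. By a limiting
argument the same bound holds for `(-∞, t)`, hence by complementation for every upper set of `ℝ`.
For a monotone `p` with values in `[m, M]`, the layer-cake formula writes `∫ p dμ - m` as the
integral over `t ∈ (0, M - m]` of the `μ`-mass of the upper set `{t ≤ p - m}`, so
`|∫ p dμ - ∫ p dν| ≤ (M - m) D`. Finally the symmetric Jordan decomposition `g = p - q`, with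
`(p y - p x) + (q y - q x)` the variation of `g` from `x` to `y`, makes the ranges of `p` and `q`
add up to at most the total variation of `g`.
-/

open Topology

theorem IsLowerSet.eq_empty_or_univ_or_Iic_or_Iio {α : Type*} [ConditionallyCompleteLinearOrder α]
    {s : Set α} (hs : IsLowerSet s) : s = ∅ ∨ s = univ ∨ ∃ a, s = Iic a ∨ s = Iio a := by
  rcases s.eq_empty_or_nonempty with rfl | hne
  · exact Or.inl rfl
  by_cases hbdd : BddAbove s
  · refine Or.inr (Or.inr ⟨sSup s, ?_⟩)
    by_cases hmem : sSup s ∈ s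
    · exact Or.inl (Subset.antisymm (fun x hx => le_csSup hbdd hx) (hs.Iic_subset hmem))
    · refine Or.inr (Subset.antisymm (fun x hx => ?_) fun x hx => ?_)
      · exact (le_csSup hbdd hx).lt_of_ne (by rintro rfl; exact hmem hx)
      · obtain ⟨y, hy, hxy⟩ := exists_lt_of_lt_csSup hne hx
        exact hs hxy.le hy
  · refine Or.inr (Or.inl (eq_univ_of_forall fun x => ?_))
    obtain ⟨y, hy, hxy⟩ := not_bddAbove_iff.1 hbdd x
    exact hs hxy.le hy

section KolmogorovBound

variable {μ ν : Measure ℝ} {D : ℝ}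

theorem abs_measureReal_Iio_sub_le [IsFiniteMeasure μ] [IsFiniteMeasure ν]
    (h : ∀ t, |μ.real (Iic t) - ν.real (Iic t)| ≤ D) (a : ℝ) :
    |μ.real (Iio a) - ν.real (Iio a)| ≤ D := by
  obtain ⟨u, hu_mono, hu_lt, hu_lim⟩ := exists_seq_strictMono_tendsto a
  have hunion : ⋃ n, Iic (u n) = Iio a := iUnion_Iic_eq_Iio_of_lt_of_tendsto hu_lt hu_lim
  have hlim : ∀ (ρ : Measure ℝ) [IsFiniteMeasure ρ],
      Tendsto (fun n => ρ.real (Iic (u n))) atTop (𝓝 (ρ.real (Iio a))) := fun ρ _ =>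
    hunion ▸ (ENNReal.tendsto_toReal (measure_ne_top _ _)).comp
      (tendsto_measure_iUnion_atTop fun _ _ hmn => Iic_subset_Iic.2 (hu_mono.monotone hmn))
  exact le_of_tendsto' ((hlim μ).sub (hlim ν)).abs fun n => h (u n)

variable [IsProbabilityMeasure μ] [IsProbabilityMeasure ν]

theorem abs_measureReal_sub_le_of_isLowerSet
    (h : ∀ t, |μ.real (Iic t) - ν.real (Iic t)| ≤ D) {s : Set ℝ} (hs : IsLowerSet s) :
    |μ.real s - ν.real s| ≤ D := by
  rcases hs.eq_empty_or_univ_or_Iic_or_Iio with rfl | rfl | ⟨a, rfl | rfl⟩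
  · simpa using (abs_nonneg _).trans (h 0)
  · simpa using (abs_nonneg _).trans (h 0)
  · exact h a
  · exact abs_measureReal_Iio_sub_le h a

theorem abs_measureReal_sub_le_of_isUpperSet
    (h : ∀ t, |μ.real (Iic t) - ν.real (Iic t)| ≤ D) {s : Set ℝ} (hs : IsUpperSet s) :
    |μ.real s - ν.real s| ≤ D := by
  have hsc : MeasurableSet sᶜ := hs.compl.ordConnected.measurableSet
  rw [← compl_compl s, probReal_compl_eq_one_sub hsc, probReal_compl_eq_one_sub hsc,
    sub_sub_sub_cancel_left, abs_sub_comm]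
  exact abs_measureReal_sub_le_of_isLowerSet h hs.compl

end KolmogorovBound

theorem Monotone.integrable_of_tendsto {μ : Measure ℝ} [IsFiniteMeasure μ] {p : ℝ → ℝ}
    (hp : Monotone p) {m M : ℝ} (hm : Tendsto p atBot (𝓝 m)) (hM : Tendsto p atTop (𝓝 M)) :
    Integrable p μ :=
  .of_bound hp.measurable.aestronglyMeasurable (max |m| |M|)
    (ae_of_all _ fun x => abs_le_max_abs_abs (hp.le_of_tendsto hm x) (hp.ge_of_tendsto hM x))

theorem Monotone.exists_tendsto_atBot_atTop {p : ℝ → ℝ} (hp : Monotone p) {C : ℝ}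
    (hC : ∀ x y, x ≤ y → p y - p x ≤ C) :
    ∃ m M, Tendsto p atBot (𝓝 m) ∧ Tendsto p atTop (𝓝 M) := by
  refine ⟨_, _, tendsto_atBot_ciInf hp ⟨p 0 - C, ?_⟩, tendsto_atTop_ciSup hp ⟨p 0 + C, ?_⟩⟩
  · rintro _ ⟨y, rfl⟩
    linarith [hC y (max y 0) (le_max_left y 0), hp (le_max_right y 0)]
  · rintro _ ⟨y, rfl⟩
    linarith [hC (min y 0) y (min_le_left y 0), hp (min_le_right y 0)]

theorem abs_integral_sub_le_of_monotone {μ ν : Measure ℝ} [IsProbabilityMeasure μ]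
    [IsProbabilityMeasure ν] {D : ℝ} (h : ∀ t, |μ.real (Iic t) - ν.real (Iic t)| ≤ D)
    {p : ℝ → ℝ} (hp : Monotone p) {m M : ℝ} (hm : Tendsto p atBot (𝓝 m))
    (hM : Tendsto p atTop (𝓝 M)) :
    |∫ x, p x ∂μ - ∫ x, p x ∂ν| ≤ (M - m) * D := by
  have hmp : ∀ x, m ≤ p x := hp.le_of_tendsto hm
  have hpM : ∀ x, p x ≤ M := hp.ge_of_tendsto hM
  have hlayer : ∀ (ρ : Measure ℝ) [IsProbabilityMeasure ρ],
      ∫ x, p x ∂ρ = m + ∫ t in Ioc 0 (M - m), ρ.real {x | t ≤ p x - m} := fun ρ _ => by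
    have hint : Integrable p ρ := hp.integrable_of_tendsto hm hM
    have hshift : Integrable (fun x => p x - m) ρ := hint.sub (integrable_const m)
    rw [← hshift.integral_eq_integral_Ioc_meas_le
      (ae_of_all _ fun x => sub_nonneg.2 (hmp x)) (ae_of_all _ fun x => sub_le_sub_right (hpM x) m),
      integral_sub hint (integrable_const m), integral_const, probReal_univ, one_smul]
    ring
  have hlayer_int : ∀ (ρ : Measure ℝ) [IsProbabilityMeasure ρ],
      IntegrableOn (fun t => ρ.real {x | t ≤ p x - m}) (Ioc 0 (M - m)) := fun ρ _ => by
    have hanti : Antitone fun t => ρ.real {x | t ≤ p x - m} :=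
      fun _ _ hst => measureReal_mono fun _ hx => hst.trans hx
    exact ((hanti.antitoneOn _).integrableOn_isCompact isCompact_Icc).mono_set Ioc_subset_Icc_self
  have hsuper : ∀ t, ‖μ.real {x | t ≤ p x - m} - ν.real {x | t ≤ p x - m}‖ ≤ D := fun t =>
    abs_measureReal_sub_le_of_isUpperSet h fun a b hab (ha : t ≤ p a - m) =>
      show t ≤ p b - m by linarith [hp hab]
  rw [hlayer μ, hlayer ν, add_sub_add_left_eq_sub, ← integral_sub (hlayer_int μ) (hlayer_int ν)]
  calc _ ≤ D * volume.real (Ioc 0 (M - m)) :=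
        norm_setIntegral_le_of_norm_le_const measure_Ioc_lt_top fun t _ => hsuper t
    _ = (M - m) * D := by
        rw [Real.volume_real_Ioc_of_le (sub_nonneg.2 ((hmp 0).trans (hpM 0))), sub_zero, mul_comm]

theorem eVariationOn_univ_eq_iSup_Icc {E : Type*} [PseudoEMetricSpace E] (f : ℝ → E) :
    eVariationOn f univ = ⨆ K : ℝ, ⨆ _ : 0 < K, eVariationOn f (Icc (-K) K) := by
  refine le_antisymm ?_ (iSup₂_le fun K _ => eVariationOn.mono f (subset_univ _))
  rw [eVariationOn.eq_biSup_inter_Icc]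
  refine iSup₂_le fun ⟨a, b⟩ _ => le_iSup₂_of_le (|a| + |b| + 1) (by positivity) ?_
  refine eVariationOn.mono f fun x ⟨_, hax, hxb⟩ => ⟨?_, ?_⟩
  · linarith [neg_abs_le a, abs_nonneg b]
  · linarith [le_abs_self b, abs_nonneg a]

theorem LocallyBoundedVariationOn.measurable {g : ℝ → ℝ} (hg : LocallyBoundedVariationOn g univ) :
    Measurable g := by
  obtain ⟨p, q, hp, hq, rfl⟩ := hg.exists_monotoneOn_sub_monotoneOn
  exact (monotoneOn_univ.1 hp).measurable.sub (monotoneOn_univ.1 hq).measurable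

theorem abs_integral_sub_le_eVariationOn_mul {μ ν : Measure ℝ} [IsProbabilityMeasure μ]
    [IsProbabilityMeasure ν] {D : ℝ} (h : ∀ t, |μ.real (Iic t) - ν.real (Iic t)| ≤ D)
    {g : ℝ → ℝ} (hg : BoundedVariationOn g univ) :
    |∫ x, g x ∂μ - ∫ x, g x ∂ν| ≤ (eVariationOn g univ).toReal * D := by
  set V := (eVariationOn g univ).toReal
  obtain ⟨p, q, hp, hq, rfl, hpq⟩ := hg.locallyBoundedVariationOn.exists_monotoneOn_sub_monotoneOn'
  rw [monotoneOn_univ] at hp hq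
  have hpqV : ∀ x y, (p y - p x) + (q y - q x) ≤ V := fun x y =>
    (hpq x trivial y trivial).trans_le
      ((le_abs_self _).trans (variationOnFromTo.abs_le_eVariationOn hg))
  obtain ⟨mp, Mp, hmp, hMp⟩ := hp.exists_tendsto_atBot_atTop (C := V) fun x y hxy => by
    linarith [hpqV x y, hq hxy]
  obtain ⟨mq, Mq, hmq, hMq⟩ := hq.exists_tendsto_atBot_atTop (C := V) fun x y hxy => by
    linarith [hpqV x y, hp hxy]
  have hrange : (Mp - mp) + (Mq - mq) ≤ V := by
    have htop : ∀ x, (Mp - p x) + (Mq - q x) ≤ V := fun x =>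
      le_of_tendsto' ((hMp.sub_const _).add (hMq.sub_const _)) (hpqV x)
    exact le_of_tendsto' ((tendsto_const_nhds.sub hmp).add (tendsto_const_nhds.sub hmq)) htop
  have hD : 0 ≤ D := (abs_nonneg _).trans (h 0)
  have hpμ := hp.integrable_of_tendsto (μ := μ) hmp hMp
  have hpν := hp.integrable_of_tendsto (μ := ν) hmp hMp
  have hqμ := hq.integrable_of_tendsto (μ := μ) hmq hMq
  have hqν := hq.integrable_of_tendsto (μ := ν) hmq hMq
  calc |∫ x, (p - q) x ∂μ - ∫ x, (p - q) x ∂ν|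
      = |(∫ x, p x ∂μ - ∫ x, p x ∂ν) - (∫ x, q x ∂μ - ∫ x, q x ∂ν)| := by
        simp only [Pi.sub_apply, integral_sub hpμ hqμ, integral_sub hpν hqν]
        congr 1
        ring
    _ ≤ |∫ x, p x ∂μ - ∫ x, p x ∂ν| + |∫ x, q x ∂μ - ∫ x, q x ∂ν| := abs_sub _ _
    _ ≤ (Mp - mp) * D + (Mq - mq) * D :=
        add_le_add (abs_integral_sub_le_of_monotone h hp hmp hMp)
          (abs_integral_sub_le_of_monotone h hq hmq hMq)
    _ ≤ V * D := by rw [← add_mul]; exact mul_le_mul_of_nonneg_right hrange hD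

theorem rvCdf_eq_measureReal_map {Ω : Type*} [MeasurableSpace Ω] (P : Measure Ω) {X : Ω → ℝ}
    (hX : Measurable X) (t : ℝ) : rvCdf P X t = (P.map X).real (Iic t) := by
  rw [map_measureReal_apply hX measurableSet_Iic]
  rfl

theorem abs_integral_sub_le_variation_mul_kolmogorov_general
    {Ω₁ Ω₂ : Type*} [MeasurableSpace Ω₁] [MeasurableSpace Ω₂]
    (P₁ : Measure Ω₁) (P₂ : Measure Ω₂)
    [IsProbabilityMeasure P₁] [IsProbabilityMeasure P₂]
    (X : Ω₁ → ℝ) (Y : Ω₂ → ℝ) (hX : Measurable X) (hY : Measurable Y)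
    (g : ℝ → ℝ)
    (hV : (⨆ K : ℝ, ⨆ _ : 0 < K, eVariationOn g (Set.Icc (-K) K)) ≠ ⊤) :
    |(∫ ω, g (X ω) ∂P₁) - ∫ ω, g (Y ω) ∂P₂| ≤
      (⨆ K : ℝ, ⨆ _ : 0 < K, eVariationOn g (Set.Icc (-K) K)).toReal *
        ⨆ t : ℝ, |rvCdf P₁ X t - rvCdf P₂ Y t| := by
  rw [← eVariationOn_univ_eq_iSup_Icc] at hV ⊢
  have hg : BoundedVariationOn g univ := hV
  have := Measure.isProbabilityMeasure_map (μ := P₁) hX.aemeasurable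
  have := Measure.isProbabilityMeasure_map (μ := P₂) hY.aemeasurable
  have hcdf : ∀ t, |(P₁.map X).real (Iic t) - (P₂.map Y).real (Iic t)| ≤
      ⨆ t : ℝ, |rvCdf P₁ X t - rvCdf P₂ Y t| := by
    have hbdd : BddAbove (range fun t => |rvCdf P₁ X t - rvCdf P₂ Y t|) := ⟨1, by
      rintro _ ⟨t, rfl⟩
      simp only [rvCdf_eq_measureReal_map _ hX, rvCdf_eq_measureReal_map _ hY]
      exact abs_sub_le_of_nonneg_of_le measureReal_nonneg measureReal_le_one measureReal_nonneg
        measureReal_le_one⟩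
    intro t
    simpa only [rvCdf_eq_measureReal_map _ hX, rvCdf_eq_measureReal_map _ hY] using le_ciSup hbdd t
  have hgm := hg.locallyBoundedVariationOn.measurable
  rw [← integral_map hX.aemeasurable hgm.aestronglyMeasurable,
    ← integral_map hY.aemeasurable hgm.aestronglyMeasurable]
  exact abs_integral_sub_le_eVariationOn_mul hcdf hg

/-- Koksma-type inequality: if `g` has finite total variation
`V = sup_{K > 0} V_{-K}^K(g)`, then `|E[g(X)] - E[g(Y)]| ≤ V · sup_t |F_X t - F_Y t|`. -/
theorem abs_integral_sub_le_variation_mul_kolmogorov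
    {Ω₁ Ω₂ : Type*} [MeasurableSpace Ω₁] [MeasurableSpace Ω₂]
    (P₁ : Measure Ω₁) (P₂ : Measure Ω₂)
    [IsProbabilityMeasure P₁] [IsProbabilityMeasure P₂]
    (X : Ω₁ → ℝ) (Y : Ω₂ → ℝ) (hX : Measurable X) (hY : Measurable Y)
    (g : ℝ → ℝ)
    (hfin : ∀ K : ℝ, 0 < K → eVariationOn g (Set.Icc (-K) K) ≠ ⊤)
    (hV : (⨆ K : ℝ, ⨆ _ : 0 < K, eVariationOn g (Set.Icc (-K) K)) ≠ ⊤) :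
    |(∫ ω, g (X ω) ∂P₁) - ∫ ω, g (Y ω) ∂P₂| ≤
      (⨆ K : ℝ, ⨆ _ : 0 < K, eVariationOn g (Set.Icc (-K) K)).toReal *
        ⨆ t : ℝ, |rvCdf P₁ X t - rvCdf P₂ Y t| :=
  abs_integral_sub_le_variation_mul_kolmogorov_general P₁ P₂ X Y hX hY g hV
end

section
/- Let F and G be cumulative distribution functions on the real line, δ > 0, K ≥ 0 and μ ∈ ℝ. Then L_δ(F,G) ≤ 1 − F(μ+K) + F(μ−K) + [ (1/δ) ∫_{[μ−K−δ, μ+K+2δ]} |F(x) − G(x)|² dλ(x) ]^{1/2}, where λ is Lebesgue measure; and moreover L_δ(F,G)² ≤ (1/δ) ∫_{ℝ} |F(x) − G(x)|² dλ(x). -/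
/-!
A gap of size `c` in the Lévy condition at `t`, say `G t < F (t - δ) - c`, persists on the whole
window `[t - δ, t]` by monotonicity: there `F - G ≥ F (t - δ) - G t`. The window has length `δ`,
so `δ c² ≤ ∫ |F - G|²`. For the localized bound, a gap at a point `t` far from `μ` is transported
to a window at the edge of `[μ - K - δ, μ + K + 2δ]`, at the price of the tail mass
`1 - F (μ + K) + F (μ - K)`.
-/

open Filter MeasureTheory Set

variable {F G : ℝ → ℝ}

namespace IsCDF

theorem nonneg (hF : IsCDF F) (x : ℝ) : 0 ≤ F x :=
  hF.1.le_of_tendsto hF.2.2.1 x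

theorem le_one (hF : IsCDF F) (x : ℝ) : F x ≤ 1 :=
  hF.1.ge_of_tendsto hF.2.2.2 x

theorem integrableOn_abs_sub_sq (hF : IsCDF F) (hG : IsCDF G) {s : Set ℝ} (hs : volume s ≠ ⊤) :
    IntegrableOn (fun x => |F x - G x| ^ 2) s := by
  refine Measure.integrableOn_of_bounded (M := 1) hs
    ((hF.1.measurable.sub hG.1.measurable).abs.pow_const 2).aestronglyMeasurable
    (ae_of_all _ fun x => ?_)
  have hFG : |F x - G x| ≤ 1 :=
    abs_le.mpr ⟨by linarith [hF.nonneg x, hG.le_one x], by linarith [hF.le_one x, hG.nonneg x]⟩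
  rw [Real.norm_eq_abs, abs_of_nonneg (by positivity)]
  exact pow_le_one₀ (abs_nonneg _) hFG

end IsCDF

theorem Monotone.sub_le_abs_sub (hF : Monotone F) (hG : Monotone G) {a b x : ℝ}
    (hx : x ∈ Icc a b) : F a - G b ≤ |F x - G x| :=
  calc F a - G b ≤ F x - G x := sub_le_sub (hF hx.1) (hG hx.2)
    _ ≤ |F x - G x| := le_abs_self _

def WindowBound (δ : ℝ) (f : ℝ → ℝ) (s : Set ℝ) (S : ℝ) : Prop :=
  ∀ a b c, δ ≤ b - a → Icc a b ⊆ s → (∀ x ∈ Icc a b, c ≤ |f x|) → c ≤ S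

theorem ofReal_mul_sq_le_setLIntegral {f : ℝ → ℝ} {s : Set ℝ} {δ a b c : ℝ} (hc : 0 ≤ c)
    (hab : δ ≤ b - a) (hs : Icc a b ⊆ s) (hf : ∀ x ∈ Icc a b, c ≤ |f x|) :
    ENNReal.ofReal (δ * c ^ 2) ≤ ∫⁻ x in s, ENNReal.ofReal (|f x| ^ 2) :=
  calc ENNReal.ofReal (δ * c ^ 2)
      ≤ ENNReal.ofReal ((b - a) * c ^ 2) := by gcongr
    _ = ∫⁻ _ in Icc a b, ENNReal.ofReal (c ^ 2) := by
      rw [setLIntegral_const, Real.volume_Icc, ← ENNReal.ofReal_mul (by linarith [sq_nonneg c]),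
        mul_comm]
    _ ≤ ∫⁻ x in Icc a b, ENNReal.ofReal (|f x| ^ 2) :=
      setLIntegral_mono' measurableSet_Icc fun x hx =>
        ENNReal.ofReal_le_ofReal (pow_le_pow_left₀ hc (hf x hx) 2)
    _ ≤ ∫⁻ x in s, ENNReal.ofReal (|f x| ^ 2) := lintegral_mono_set hs

theorem windowBound_sqrt_setIntegral {f : ℝ → ℝ} {s : Set ℝ} {δ : ℝ} (hδ : 0 < δ)
    (hf : IntegrableOn (fun x => |f x| ^ 2) s) :
    WindowBound δ f s (Real.sqrt ((1 / δ) * ∫ x in s, |f x| ^ 2)) := by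
  intro a b c hab hs hc
  rcases le_or_gt c 0 with hc0 | hc0
  · exact hc0.trans (Real.sqrt_nonneg _)
  have hnn : 0 ≤ᵐ[volume.restrict s] fun x => |f x| ^ 2 := ae_of_all _ fun x => by positivity
  have hlint := ofReal_mul_sq_le_setLIntegral hc0.le hab hs hc
  rw [← ofReal_integral_eq_lintegral_ofReal hf hnn,
    ENNReal.ofReal_le_ofReal_iff (integral_nonneg_of_ae hnn)] at hlint
  rw [Real.le_sqrt' hc0, one_div, inv_mul_eq_div, le_div_iff₀ hδ]
  linarith

section LevyGauge

variable {δ : ℝ}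

theorem levyGauge_nonneg : 0 ≤ levyGauge δ F G :=
  Real.sInf_nonneg fun _ hε => hε.1

theorem levyGauge_le {ε : ℝ} (hε : 0 ≤ ε) (hlow : ∀ t, F (t - δ) - G t ≤ ε)
    (hup : ∀ t, G t - F (t + δ) ≤ ε) : levyGauge δ F G ≤ ε :=
  csInf_le ⟨0, fun _ hη => hη.1⟩
    ⟨hε, fun t => ⟨by linarith [hlow t], by linarith [hup t]⟩⟩

theorem levyGauge_le_of_windowBound (hF : Monotone F) (hG : Monotone G) {S : ℝ} (hS : 0 ≤ S)
    (h : WindowBound δ (F - G) univ S) : levyGauge δ F G ≤ S :=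
  levyGauge_le hS
    (fun t => h (t - δ) t _ (by linarith) (subset_univ _) fun _ hx => hF.sub_le_abs_sub hG hx)
    (fun t => h t (t + δ) _ (by linarith) (subset_univ _) fun _ hx =>
      (hG.sub_le_abs_sub hF hx).trans_eq (abs_sub_comm _ _))

variable {K μ S : ℝ}

theorem IsCDF.sub_le_tails_add (hF : IsCDF F) (hG : IsCDF G) (hδ : 0 ≤ δ) (hK : 0 ≤ K)
    (hS : 0 ≤ S) (h : WindowBound δ (F - G) (Icc (μ - K - δ) (μ + K + 2 * δ)) S) (t : ℝ) :
    F (t - δ) - G t ≤ 1 - F (μ + K) + F (μ - K) + S := by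
  have tail := hF.le_one (μ + K)
  have tail' := hF.nonneg (μ - K)
  rcases lt_or_ge t (μ - K) with ht | ht
  · linarith [hF.1 (show t - δ ≤ μ - K by linarith), hG.nonneg t]
  rcases le_or_gt t (μ + K + 2 * δ) with ht' | ht'
  · linarith [h (t - δ) t _ (by linarith) (Icc_subset_Icc (by linarith) ht') fun _ hx =>
      hF.1.sub_le_abs_sub hG.1 hx]
  · have hwin := h (μ + K + δ) (μ + K + 2 * δ) _ (by linarith)
      (Icc_subset_Icc (by linarith) le_rfl) fun _ hx => hF.1.sub_le_abs_sub hG.1 hx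
    linarith [hF.le_one (t - δ), hF.1 (show μ + K ≤ μ + K + δ by linarith),
      hG.1 (show μ + K + 2 * δ ≤ t by linarith)]

theorem IsCDF.sub_le_tails_add' (hF : IsCDF F) (hG : IsCDF G) (hδ : 0 ≤ δ) (hK : 0 ≤ K)
    (hS : 0 ≤ S) (h : WindowBound δ (F - G) (Icc (μ - K - δ) (μ + K + 2 * δ)) S) (t : ℝ) :
    G t - F (t + δ) ≤ 1 - F (μ + K) + F (μ - K) + S := by
  have tail := hF.le_one (μ + K)
  have tail' := hF.nonneg (μ - K)
  rcases lt_or_ge (μ + K + δ) t with ht | ht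
  · linarith [hF.1 (show μ + K ≤ t + δ by linarith), hG.le_one t]
  rcases le_or_gt (μ - K - δ) t with ht' | ht'
  · linarith [h t (t + δ) _ (by linarith) (Icc_subset_Icc ht' (by linarith)) fun _ hx =>
      (hG.1.sub_le_abs_sub hF.1 hx).trans_eq (abs_sub_comm _ _)]
  · have hwin := h (μ - K - δ) (μ - K) _ (by linarith)
      (Icc_subset_Icc le_rfl (by linarith)) fun _ hx =>
        (hG.1.sub_le_abs_sub hF.1 hx).trans_eq (abs_sub_comm _ _)
    linarith [hF.nonneg (t + δ), hG.1 ht'.le]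

theorem IsCDF.levyGauge_le_tails_add (hF : IsCDF F) (hG : IsCDF G) (hδ : 0 ≤ δ) (hK : 0 ≤ K)
    (hS : 0 ≤ S) (h : WindowBound δ (F - G) (Icc (μ - K - δ) (μ + K + 2 * δ)) S) :
    levyGauge δ F G ≤ 1 - F (μ + K) + F (μ - K) + S :=
  levyGauge_le (by linarith [hF.le_one (μ + K), hF.nonneg (μ - K)])
    (hF.sub_le_tails_add hG hδ hK hS h) (hF.sub_le_tails_add' hG hδ hK hS h)

theorem IsCDF.ofReal_levyGauge_sq_le (hF : IsCDF F) (hG : IsCDF G) (hδ : 0 < δ) :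
    ENNReal.ofReal ((levyGauge δ F G) ^ 2) ≤
      ENNReal.ofReal (1 / δ) * ∫⁻ x : ℝ, ENNReal.ofReal (|F x - G x| ^ 2) := by
  have hnn : 0 ≤ᵐ[volume] fun x => |F x - G x| ^ 2 := ae_of_all _ fun x => by positivity
  by_cases hI : ∫⁻ x : ℝ, ENNReal.ofReal (|F x - G x| ^ 2) = ⊤
  · rw [hI, ENNReal.mul_top (by simpa using hδ)]
    exact le_top
  have hint : Integrable (fun x => |F x - G x| ^ 2) :=
    ⟨((hF.1.measurable.sub hG.1.measurable).abs.pow_const 2).aestronglyMeasurable,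
      (hasFiniteIntegral_iff_ofReal hnn).mpr (lt_top_iff_ne_top.mpr hI)⟩
  have hwin := windowBound_sqrt_setIntegral (f := F - G) (s := univ) hδ hint.integrableOn
  rw [Measure.restrict_univ] at hwin
  have hL := levyGauge_le_of_windowBound hF.1 hG.1 (Real.sqrt_nonneg _) hwin
  rw [← ofReal_integral_eq_lintegral_ofReal hint hnn, ← ENNReal.ofReal_mul (by positivity)]
  refine ENNReal.ofReal_le_ofReal ?_
  calc levyGauge δ F G ^ 2 ≤ Real.sqrt ((1 / δ) * ∫ x, |F x - G x| ^ 2) ^ 2 :=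
        pow_le_pow_left₀ levyGauge_nonneg hL 2
    _ = (1 / δ) * ∫ x, |F x - G x| ^ 2 :=
        Real.sq_sqrt (mul_nonneg (by positivity) (integral_nonneg_of_ae hnn))

end LevyGauge

/-- `L²` bounds for the Lévy gauge:
`L_δ(F,G) ≤ 1 - F(μ+K) + F(μ-K) + √((1/δ) ∫_{[μ-K-δ, μ+K+2δ]} |F-G|² dλ)` and
`L_δ(F,G)² ≤ (1/δ) ∫_ℝ |F-G|² dλ`. -/
theorem levyGauge_le_L2 (F G : ℝ → ℝ) (hF : IsCDF F) (hG : IsCDF G)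
    (δ : ℝ) (hδ : 0 < δ) (K : ℝ) (hK : 0 ≤ K) (μ : ℝ) :
    levyGauge δ F G ≤ 1 - F (μ + K) + F (μ - K) +
      Real.sqrt ((1 / δ) * ∫ x in Set.Icc (μ - K - δ) (μ + K + 2 * δ), |F x - G x| ^ 2) ∧
    ENNReal.ofReal ((levyGauge δ F G) ^ 2) ≤
      ENNReal.ofReal (1 / δ) * ∫⁻ x : ℝ, ENNReal.ofReal (|F x - G x| ^ 2) :=
  ⟨hF.levyGauge_le_tails_add hG hδ.le hK (Real.sqrt_nonneg _)
      (windowBound_sqrt_setIntegral hδ (hF.integrableOn_abs_sub_sq hG measure_Icc_lt_top.ne)),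
    hF.ofReal_levyGauge_sq_le hG hδ⟩
end
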